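/- For each integer s ≥ 2, the Cayley digraph Γ_s = Cay(R_s, {a_s b_s, b_s}), where a_s = (2s−1,2s)(4s−1,4s), b_s = (1,3,5,…,4s−1,2,4,6,…,4s) ∈ Sym(4s) and R_s = ⟨a_s, b_s⟩, is isomorphic to the coset digraph Cos(G,H,HgH) where G = ⟨h,g⟩ with h = (1,2), g = (1,3,…,4s−1)(2,4,…,4s), and H = ⟨h, h^g, …, h^{g^{s−1}}⟩. -/

import Mathlib

/-!
Number the points so that `2i+1, 2i+2` form a lamp at position `i ∈ ℤ/2s`. Then `G` lies in the
lamplighter group `ℤ/2 ≀ ℤ/2s`: `g` moves every lamp one position on, `h` toggles the lamp at `0`,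
and `H` consists of the lamp configurations supported on the positions `0, …, s-1`.

Both generators of `R = ⟨a, b⟩` commute with `b^s`, whose position part is `s`, and a
configuration commuting with `b^s` is `s`-periodic, so `R ∩ H = 1`. Conversely `G = RH`: the
conjugates of `a` by powers of `b` toggle the lamps at `j` and `j + s` together, so a lamp at a
position `≥ s` can be traded for one at a position `< s`. Hence `R` is a complement of `H`,
`r ↦ Hr` is a bijection onto the cosets, and it carries `Cos(G, H, HgH)` to
`Cay(R, R ∩ HgH)`. Finally an element of `R ∩ HgH` differs from `b` by an `s`-periodic
configuration supported on `0, …, s`, which leaves only `b` and `ab`.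
-/

open scoped Pointwise
open DoubleCoset

lemma QuotientGroup.exists_mk_eq_inv_mul_mem_doubleCoset_iff {Γ : Type*} [Group Γ]
    (H : Subgroup Γ) (x₀ y₀ d : Γ) :
    (∃ x y : Γ, (x : Γ ⧸ H) = x₀ ∧ (y : Γ ⧸ H) = y₀ ∧ ∃ h₁ ∈ H, ∃ h₂ ∈ H, x⁻¹ * y = h₁ * d * h₂) ↔
      x₀⁻¹ * y₀ ∈ doubleCoset d H H := by
  rw [mem_doubleCoset]
  constructor
  · rintro ⟨x, y, hx, hy, h₁, hh₁, h₂, hh₂, hxy⟩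
    have hx' := QuotientGroup.eq.1 hx
    have hy' := QuotientGroup.eq.1 hy
    refine ⟨(x⁻¹ * x₀)⁻¹ * h₁, mul_mem (inv_mem hx') hh₁, h₂ * (y⁻¹ * y₀), mul_mem hh₂ hy', ?_⟩
    calc x₀⁻¹ * y₀ = (x⁻¹ * x₀)⁻¹ * (x⁻¹ * y) * (y⁻¹ * y₀) := by group
      _ = _ := by rw [hxy]; group
  · rintro ⟨h₁, hh₁, h₂, hh₂, hxy⟩
    exact ⟨x₀, y₀, rfl, rfl, h₁, hh₁, h₂, hh₂, hxy⟩

namespace Subgroup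

variable {P Q : Type*} [Group P] [Group Q]

lemma image_doubleCoset (f : P →* Q) (d : P) (H K : Set P) :
    f '' doubleCoset d H K = doubleCoset (f d) (f '' H) (f '' K) := by
  simp only [doubleCoset, Set.image_mul, Set.image_singleton]

lemma mem_image_iff_mem_doubleCoset_map {f : P →* Q} (hf : Function.Injective f)
    {R K : Subgroup P} {S : Set P} {d : P} (hS : ∀ r ∈ R, r ∈ S ↔ r ∈ doubleCoset d K K) :
    ∀ r ∈ R.map f, r ∈ f '' S ↔ r ∈ doubleCoset (f d) (K.map f) (K.map f) := by
  rintro _ ⟨r, hr, rfl⟩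
  rw [hf.mem_set_image, coe_map, ← image_doubleCoset, hf.mem_set_image]
  exact hS r hr

lemma coe_mem_doubleCoset_iff {G K : Subgroup P} (hKG : K ≤ G) (x d : G) :
    (x : P) ∈ doubleCoset (d : P) K K ↔ x ∈ doubleCoset d (K.subgroupOf G) (K.subgroupOf G) := by
  simp only [mem_doubleCoset, Subtype.exists, Subtype.ext_iff, coe_mul, SetLike.mem_coe,
    mem_subgroupOf]
  constructor
  · rintro ⟨a, ha, b, hb, h⟩
    exact ⟨a, hKG ha, ha, b, hKG hb, hb, h⟩
  · rintro ⟨a, -, ha, b, -, hb, h⟩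
    exact ⟨a, ha, b, hb, h⟩

structure IsComplementIn (R K G : Subgroup P) : Prop where
  left_le : R ≤ G
  right_le : K ≤ G
  disjoint : Disjoint R K
  subset_mul : (G : Set P) ⊆ (R : Set P) * K

namespace IsComplementIn

variable {R K G : Subgroup P}

lemma isComplement' (hc : IsComplementIn R K G) :
    IsComplement' (R.subgroupOf G) (K.subgroupOf G) := by
  refine isComplement'_of_disjoint_and_mul_eq_univ ?_ ?_
  · rw [disjoint_def]
    exact fun hr hk => Subtype.ext (disjoint_def.1 hc.disjoint hr hk)
  · refine Set.eq_univ_of_forall fun x => ?_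
    obtain ⟨r, hr, k, hk, hrk⟩ := hc.subset_mul x.2
    exact ⟨⟨r, hc.left_le hr⟩, hr, ⟨k, hc.right_le hk⟩, hk, Subtype.ext hrk⟩

lemma map (hc : IsComplementIn R K G) {f : P →* Q} (hf : Function.Injective f) :
    IsComplementIn (R.map f) (K.map f) (G.map f) where
  left_le := map_mono hc.left_le
  right_le := map_mono hc.right_le
  disjoint := disjoint_map hf hc.disjoint
  subset_mul := by
    simpa only [coe_map, Set.image_mul] using Set.image_mono (f := f) hc.subset_mul

/-- Via `r ↦ rK`, the coset digraph `Cos(G, K, KdK)` is the Cayley digraph of `R` on `R ∩ KdK`. -/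
theorem exists_equiv_quotient (hc : IsComplementIn R K G) (d : G) (S : Set P)
    (hS : ∀ r ∈ R, r ∈ S ↔ r ∈ doubleCoset (d : P) K K) :
    ∃ ψ : R ≃ G ⧸ K.subgroupOf G, ∀ r₁ r₂ : R,
      ((r₁ : P)⁻¹ * r₂ ∈ S ↔ ∃ x y : G, QuotientGroup.mk x = ψ r₁ ∧ QuotientGroup.mk y = ψ r₂ ∧
        ∃ h₁ ∈ K.subgroupOf G, ∃ h₂ ∈ K.subgroupOf G, x⁻¹ * y = h₁ * d * h₂) := by
  let ι : R ≃ R.subgroupOf G := (subgroupOfEquivOfLe hc.left_le).symm.toEquiv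
  refine ⟨ι.trans (Equiv.ofBijective _
    (isComplement_subgroup_right_iff_bijective.1 hc.isComplement')), fun r₁ r₂ => ?_⟩
  exact (hS _ (mul_mem (inv_mem r₁.2) r₂.2)).trans
    ((coe_mem_doubleCoset_iff hc.right_le (⟨r₁, hc.left_le r₁.2⟩⁻¹ * ⟨r₂, hc.left_le r₂.2⟩) d).trans
      (QuotientGroup.exists_mk_eq_inv_mul_mem_doubleCoset_iff _ _ _ _).symm)

end IsComplementIn

end Subgroup

@[ext]
structure Lamplighter (m : ℕ) where
  lamps : ZMod m → ZMod 2
  pos : ZMod m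

namespace Lamplighter

open Subgroup

section Group

variable {m : ℕ}

def shift (k : ZMod m) (v : ZMod m → ZMod 2) : ZMod m → ZMod 2 := fun i => v (i - k)

@[simp] lemma shift_apply (k : ZMod m) (v : ZMod m → ZMod 2) (i : ZMod m) :
    shift k v i = v (i - k) := rfl

@[simp] lemma shift_zero (v : ZMod m → ZMod 2) : shift 0 v = v := by
  ext; simp

@[simp] lemma shift_shift (k l : ZMod m) (v : ZMod m → ZMod 2) :
    shift k (shift l v) = shift (k + l) v := by
  ext; simp [sub_sub]

@[simp] lemma shift_add (k : ZMod m) (v w : ZMod m → ZMod 2) :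
    shift k (v + w) = shift k v + shift k w := rfl

@[simp] lemma shift_single (k j : ZMod m) (c : ZMod 2) :
    shift k (Pi.single j c) = Pi.single (j + k) c := by
  ext i; simp [Pi.single_apply, sub_eq_iff_eq_add]

instance : Mul (Lamplighter m) := ⟨fun x y => ⟨x.lamps + shift x.pos y.lamps, x.pos + y.pos⟩⟩
instance : One (Lamplighter m) := ⟨⟨0, 0⟩⟩
instance : Inv (Lamplighter m) := ⟨fun x => ⟨-shift (-x.pos) x.lamps, -x.pos⟩⟩

@[simp] lemma mul_lamps (x y : Lamplighter m) :
    (x * y).lamps = x.lamps + shift x.pos y.lamps := rfl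
@[simp] lemma mul_pos (x y : Lamplighter m) : (x * y).pos = x.pos + y.pos := rfl
@[simp] lemma one_lamps : (1 : Lamplighter m).lamps = 0 := rfl
@[simp] lemma one_pos : (1 : Lamplighter m).pos = 0 := rfl
@[simp] lemma inv_lamps (x : Lamplighter m) : x⁻¹.lamps = -shift (-x.pos) x.lamps := rfl
@[simp] lemma inv_pos (x : Lamplighter m) : x⁻¹.pos = -x.pos := rfl

instance : Group (Lamplighter m) where
  mul_assoc x y z := by ext <;> simp [add_assoc]
  one_mul x := by ext <;> simp
  mul_one x := by ext <;> simp
  inv_mul_cancel x := by ext <;> simp [CharTwo.add_self_eq_zero]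

@[simp] lemma pow_pos (x : Lamplighter m) (n : ℕ) : (x ^ n).pos = n * x.pos := by
  induction n with
  | zero => simp
  | succ n ih => simp [pow_succ, ih, add_mul]

lemma conj_mk_zero (x : Lamplighter m) (w : ZMod m → ZMod 2) :
    x * ⟨w, 0⟩ * x⁻¹ = ⟨shift x.pos w, 0⟩ := by
  ext <;> simp [add_right_comm _ _ (x.lamps _), CharTwo.add_self_eq_zero]

lemma mk_zero_mem_centralizer_iff (w : ZMod m → ZMod 2) (y : Lamplighter m) :
    (⟨w, 0⟩ : Lamplighter m) ∈ centralizer {y} ↔ shift y.pos w = w := by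
  simp only [mem_centralizer_singleton_iff, Lamplighter.ext_iff, mul_lamps, mul_pos, shift_zero,
    zero_add, add_zero, and_true]
  rw [add_comm w, add_right_inj, eq_comm]

def lamp (j : ZMod m) : Lamplighter m := ⟨Pi.single j 1, 0⟩

def step : Lamplighter m := ⟨0, 1⟩

@[simp] lemma lamp_lamps (j : ZMod m) : (lamp j).lamps = Pi.single j 1 := rfl
@[simp] lemma lamp_pos (j : ZMod m) : (lamp j).pos = 0 := rfl
@[simp] lemma step_lamps : (step : Lamplighter m).lamps = 0 := rfl
@[simp] lemma step_pos : (step : Lamplighter m).pos = 1 := rfl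

lemma lamp_mul_lamp (i j : ZMod m) :
    lamp i * lamp j = ⟨Pi.single i 1 + Pi.single j 1, 0⟩ := by
  ext <;> simp

@[simp] lemma lamp_inv (j : ZMod m) : (lamp j)⁻¹ = lamp j := by
  ext <;> simp

@[simp] lemma lamp_mul_self (j : ZMod m) : lamp j * lamp j = 1 :=
  mul_eq_one_iff_eq_inv.2 (lamp_inv j).symm

lemma lamp_mul_comm (i j : ZMod m) : lamp i * lamp j = lamp j * lamp i := by
  rw [lamp_mul_lamp, lamp_mul_lamp, add_comm]

lemma conj_lamp (x : Lamplighter m) (j : ZMod m) : x * lamp j * x⁻¹ = lamp (j + x.pos) := by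
  rw [lamp, conj_mk_zero, shift_single]; rfl

lemma lamp_mul_eq_mul_lamp (x : Lamplighter m) (j : ZMod m) :
    lamp j * x = x * lamp (j - x.pos) := by
  have h := conj_lamp x⁻¹ j
  rw [inv_inv, inv_pos, ← sub_eq_add_neg] at h
  rw [← h]
  group

lemma lamp_zero_mul_step_mul_lamp_mul_lamp_neg_one (j : ZMod m) :
    lamp 0 * step * (lamp j * lamp (-1)) = step * lamp j := by
  rw [lamp_mul_eq_mul_lamp, lamp_mul_comm, step_pos, zero_sub, mul_assoc,
    ← mul_assoc (lamp (-1)), lamp_mul_self, one_mul]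

lemma step_pow_conj_lamp_zero (n : ℕ) :
    step ^ n * lamp 0 * (step ^ n)⁻¹ = (lamp n : Lamplighter m) := by
  rw [conj_lamp]; simp

def lampsBelow (m n : ℕ) : Subgroup (Lamplighter m) where
  carrier := {x | x.pos = 0 ∧ ∀ i : ZMod m, n ≤ i.val → x.lamps i = 0}
  mul_mem' := by
    rintro x y ⟨hx, hx'⟩ ⟨hy, hy'⟩
    exact ⟨by simp [hx, hy], fun i hi => by simp [hx, hx' i hi, hy' i hi]⟩
  one_mem' := ⟨rfl, fun _ _ => rfl⟩
  inv_mem' := by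
    rintro x ⟨hx, hx'⟩
    exact ⟨by simp [hx], fun i hi => by simp [hx, hx' i hi]⟩

end Group

section Complement

variable (s : ℕ)

def genSub : Subgroup (Lamplighter (2 * s)) := closure {lamp 0, step}

def cayleySub : Subgroup (Lamplighter (2 * s)) :=
  closure {lamp ((s : ZMod (2 * s)) - 1) * lamp (-1), lamp 0 * step}

def lampSub : Subgroup (Lamplighter (2 * s)) :=
  closure (Set.range fun i : Fin s => lamp (i : ZMod (2 * s)))

variable {s}

lemma natCast_add_self_eq_zero : (s : ZMod (2 * s)) + s = 0 := by
  rw [← two_mul]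
  exact_mod_cast ZMod.natCast_self (2 * s)

lemma lampSub_le_lampsBelow : lampSub s ≤ lampsBelow (2 * s) s := by
  rw [lampSub, closure_le]
  rintro _ ⟨i, rfl⟩
  refine ⟨rfl, fun j hj => Pi.single_eq_of_ne ?_ _⟩
  rintro rfl
  rw [ZMod.val_cast_of_lt (by omega)] at hj
  omega

lemma map_lampSub {P : Type*} [Group P] (f : Lamplighter (2 * s) →* P) :
    (lampSub s).map f =
      closure {x | ∃ i : Fin s, x = f step ^ (i : ℕ) * f (lamp 0) * (f step ^ (i : ℕ))⁻¹} := by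
  rw [lampSub, MonoidHom.map_closure, ← Set.range_comp]
  congr 1
  ext x
  simp only [Set.mem_ofPred_eq, Set.mem_range, Function.comp_apply, eq_comm (a := x), ← map_pow,
    ← map_inv, ← map_mul, step_pow_conj_lamp_zero]

lemma lamp_zero_mul_step_mem_centralizer :
    lamp 0 * step ∈ centralizer {(lamp 0 * step : Lamplighter (2 * s)) ^ s} :=
  mem_centralizer_singleton_iff.2 (Commute.self_pow _ _).eq

lemma cayleySub_le_centralizer : cayleySub s ≤ centralizer {(lamp 0 * step) ^ s} := by
  rw [cayleySub, closure_le]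
  rintro x (rfl | rfl)
  · rw [SetLike.mem_coe, lamp_mul_lamp, mk_zero_mem_centralizer_iff]
    have h₁ : (s : ZMod (2 * s)) - 1 + s = -1 := by
      linear_combination (natCast_add_self_eq_zero (s := s))
    have h₂ : (-1 : ZMod (2 * s)) + s = s - 1 := by ring
    simp [h₁, h₂, add_comm]
  · exact lamp_zero_mul_step_mem_centralizer

variable [NeZero s]

lemma val_natCast_half : (s : ZMod (2 * s)).val = s :=
  ZMod.val_cast_of_lt (by have := NeZero.pos s; omega)

lemma val_natCast_half_sub_one : ((s : ZMod (2 * s)) - 1).val = s - 1 := by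
  have hs := NeZero.pos s
  rw [← Nat.cast_one, ← Nat.cast_sub hs, ZMod.val_cast_of_lt (by omega)]

lemma val_one_half : (1 : ZMod (2 * s)).val = 1 :=
  ZMod.val_one'' (by have := NeZero.ne s; omega)

lemma val_neg_one_half : (-1 : ZMod (2 * s)).val = 2 * s - 1 := by
  rw [ZMod.neg_val', val_one_half]
  exact Nat.mod_eq_of_lt (by have := NeZero.pos s; omega)

lemma val_add_half (i : ZMod (2 * s)) :
    (i + s).val = if i.val < s then i.val + s else i.val - s := by
  have := ZMod.val_lt i
  rw [ZMod.val_add, val_natCast_half]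
  split_ifs with h
  · exact Nat.mod_eq_of_lt (by omega)
  · rw [Nat.mod_eq_sub_mod (by omega), Nat.mod_eq_of_lt (by omega)]
    omega

lemma natCast_half_ne_zero : (s : ZMod (2 * s)) ≠ 0 := by
  intro h
  have := congrArg ZMod.val h
  rw [val_natCast_half, ZMod.val_zero] at this
  exact NeZero.ne s this

lemma eq_single_add_single_of_shift_eq {w : ZMod (2 * s) → ZMod 2} (hw : shift s w = w)
    (hlow : ∀ i : ZMod (2 * s), s < i.val → w i = 0) :
    w = Pi.single 0 (w 0) + Pi.single (s : ZMod (2 * s)) (w 0) := by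
  have hper : ∀ i, w (i + s) = w i := fun i => by simpa using (congrFun hw (i + s)).symm
  ext i
  simp only [Pi.add_apply, Pi.single_apply]
  by_cases h0 : i = 0
  · simp [h0, natCast_half_ne_zero.symm]
  by_cases hs : i = s
  · rw [if_neg h0, if_pos hs, hs, ← hper 0, zero_add, zero_add]
  rw [if_neg h0, if_neg hs, add_zero]
  have hv0 : i.val ≠ 0 := fun h => h0 ((ZMod.val_eq_zero i).1 h)
  have hvs : i.val ≠ s := fun h => hs (by rw [← ZMod.natCast_zmod_val i, h])
  rcases lt_or_gt_of_ne hvs with hlt | hgt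
  · rw [← hper i]
    exact hlow _ (by rw [val_add_half, if_pos hlt]; omega)
  · exact hlow i hgt

lemma disjoint_centralizer_lampsBelow (y : Lamplighter (2 * s)) (hy : y.pos = s) :
    Disjoint (centralizer {y}) (lampsBelow (2 * s) s) := by
  rw [disjoint_def]
  rintro ⟨w, k⟩ hx ⟨rfl : k = 0, hlow : ∀ i : ZMod (2 * s), s ≤ i.val → w i = 0⟩
  rw [mk_zero_mem_centralizer_iff, hy] at hx
  have hw := eq_single_add_single_of_shift_eq hx fun i hi => hlow i hi.le
  have hs := congrFun hw s
  simp only [hlow s val_natCast_half.ge, Pi.add_apply, Pi.single_eq_same,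
    Pi.single_eq_of_ne natCast_half_ne_zero, zero_add] at hs
  rw [← hs, Pi.single_zero, Pi.single_zero, add_zero] at hw
  ext <;> simp [hw]

lemma eq_of_mem_centralizer_of_mem_doubleCoset {r : Lamplighter (2 * s)}
    (hr : r ∈ centralizer {(lamp 0 * step) ^ s})
    (hd : r ∈ doubleCoset step (lampsBelow (2 * s) s) (lampsBelow (2 * s) s)) :
    r = lamp 0 * step * (lamp ((s : ZMod (2 * s)) - 1) * lamp (-1)) ∨ r = lamp 0 * step := by
  obtain ⟨κ₁, ⟨hp₁, hl₁⟩, κ₂, ⟨hp₂, hl₂⟩, rfl⟩ := mem_doubleCoset.1 hd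
  set w := (κ₁ * step * κ₂).lamps + Pi.single 0 1
  have hrw : κ₁ * step * κ₂ = ⟨w, 0⟩ * (lamp 0 * step) := by
    ext <;> simp [w, hp₁, hp₂, add_assoc, CharTwo.add_self_eq_zero]
  have hcw : shift s w = w := by
    have := mul_mem hr (inv_mem lamp_zero_mul_step_mem_centralizer)
    rwa [hrw, mul_inv_cancel_right, mk_zero_mem_centralizer_iff, pow_pos, mul_pos, lamp_pos,
      step_pos, zero_add, mul_one] at this
  have hlow : ∀ i : ZMod (2 * s), s < i.val → w i = 0 := by
    intro i hi
    have hi1 : (i - 1).val = i.val - 1 := by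
      rw [ZMod.val_sub (by rw [val_one_half]; omega), val_one_half]
    have hi0 : i ≠ 0 := by rintro rfl; simp at hi
    simp [w, hp₁, hl₁ i hi.le, hl₂ (i - 1) (by omega), hi0]
  rw [hrw, eq_single_add_single_of_shift_eq hcw hlow]
  rcases (by decide : ∀ c : ZMod 2, c = 0 ∨ c = 1) (w 0) with h | h <;> rw [h]
  · right
    ext <;> simp
  · left
    ext <;> simp [Pi.single_apply, add_assoc]

lemma lamp_mem_genSub (j : ZMod (2 * s)) : lamp j ∈ genSub s := by
  have hlamp : lamp 0 ∈ genSub s := subset_closure (by simp)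
  have hstep : step ∈ genSub s := subset_closure (by simp)
  rw [← ZMod.natCast_zmod_val j, ← step_pow_conj_lamp_zero]
  exact mul_mem (mul_mem (pow_mem hstep _) hlamp) (inv_mem (pow_mem hstep _))

lemma lamp_mem_lampSub {j : ZMod (2 * s)} (hj : j.val < s) : lamp j ∈ lampSub s :=
  subset_closure ⟨⟨j.val, hj⟩, by simp⟩

lemma lamp_mul_lamp_add_half_mem_cayleySub (j : ZMod (2 * s)) :
    lamp j * lamp (j + (s : ZMod (2 * s))) ∈ cayleySub s := by
  have ha : lamp ((s : ZMod (2 * s)) - 1) * lamp (-1) ∈ cayleySub s := subset_closure (by simp)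
  have hb : lamp 0 * step ∈ cayleySub s := subset_closure (by simp)
  have hconj := mul_mem (mul_mem (pow_mem hb (j - (s - 1)).val) ha)
    (inv_mem (pow_mem hb (j - (s - 1)).val))
  convert hconj using 1
  rw [lamp_mul_lamp, lamp_mul_lamp, conj_mk_zero, pow_pos, mul_pos, lamp_pos, step_pos, zero_add,
    mul_one, ZMod.natCast_zmod_val, shift_add, shift_single, shift_single]
  congr 3
  · ring
  · linear_combination (natCast_add_self_eq_zero (s := s))

lemma lamp_mul_mem_cayleySub_mul_lampSub (j : ZMod (2 * s)) {x : Lamplighter (2 * s)}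
    (hx : x ∈ (cayleySub s : Set (Lamplighter (2 * s))) * lampSub s) :
    lamp j * x ∈ (cayleySub s : Set (Lamplighter (2 * s))) * lampSub s := by
  obtain ⟨r, hr, κ, hκ, rfl⟩ := hx
  rw [← mul_assoc, lamp_mul_eq_mul_lamp]
  set i := j - r.pos
  by_cases hi : i.val < s
  · exact ⟨r, hr, lamp i * κ, mul_mem (lamp_mem_lampSub hi) hκ, by group⟩
  · set i' := i + (s : ZMod (2 * s))
    have hi' : i'.val < s := by
      rw [val_add_half, if_neg hi]
      have := ZMod.val_lt i
      omega
    refine ⟨r * (lamp i * lamp i'), mul_mem hr (lamp_mul_lamp_add_half_mem_cayleySub i),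
      lamp i' * κ, mul_mem (lamp_mem_lampSub hi') hκ, ?_⟩
    calc r * (lamp i * lamp i') * (lamp i' * κ) = r * lamp i * (lamp i' * lamp i') * κ := by group
      _ = r * lamp i * κ := by rw [lamp_mul_self, mul_one]

lemma genSub_subset_cayleySub_mul_lampSub :
    (genSub s : Set (Lamplighter (2 * s))) ⊆ (cayleySub s : Set (Lamplighter (2 * s))) * lampSub s := by
  have hb : lamp 0 * step ∈ cayleySub s := subset_closure (by simp)
  have hR : ∀ r ∈ cayleySub s, ∀ x ∈ (cayleySub s : Set (Lamplighter (2 * s))) * lampSub s,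
      r * x ∈ (cayleySub s : Set (Lamplighter (2 * s))) * lampSub s := by
    rintro r hr _ ⟨r', hr', κ, hκ, rfl⟩
    exact ⟨r * r', mul_mem hr hr', κ, hκ, mul_assoc _ _ _⟩
  intro x hx
  induction hx using closure_induction_left with
  | one => exact ⟨1, one_mem _, 1, one_mem _, one_mul 1⟩
  | mul_left x hx y _ ih =>
    rcases hx with rfl | rfl
    · exact lamp_mul_mem_cayleySub_mul_lampSub 0 ih
    · rw [show step * y = lamp 0 * ((lamp 0 * step) * y) by
        rw [← mul_assoc, ← mul_assoc, lamp_mul_self, one_mul]]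
      exact lamp_mul_mem_cayleySub_mul_lampSub 0 (hR _ hb y ih)
  | inv_mul_cancel x hx y _ ih =>
    rcases hx with rfl | rfl
    · rw [lamp_inv]
      exact lamp_mul_mem_cayleySub_mul_lampSub 0 ih
    · rw [show step⁻¹ * y = (lamp 0 * step)⁻¹ * (lamp 0 * y) by group]
      exact hR _ (inv_mem hb) _ (lamp_mul_mem_cayleySub_mul_lampSub 0 ih)

theorem isComplementIn_cayleySub_lampSub :
    IsComplementIn (cayleySub s) (lampSub s) (genSub s) where
  left_le := by
    rw [cayleySub, closure_le]
    rintro _ (rfl | rfl)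
    · exact mul_mem (lamp_mem_genSub _) (lamp_mem_genSub _)
    · exact mul_mem (lamp_mem_genSub 0) (subset_closure (by simp))
  right_le := by
    rw [lampSub, closure_le]
    rintro _ ⟨i, rfl⟩
    exact lamp_mem_genSub _
  disjoint := (disjoint_centralizer_lampsBelow _ (by simp)).mono cayleySub_le_centralizer
    lampSub_le_lampsBelow
  subset_mul := genSub_subset_cayleySub_mul_lampSub

theorem mem_pair_iff_mem_doubleCoset {r : Lamplighter (2 * s)} (hr : r ∈ cayleySub s) :
    r ∈ ({lamp 0 * step * (lamp ((s : ZMod (2 * s)) - 1) * lamp (-1)), lamp 0 * step} : Set _) ↔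
      r ∈ doubleCoset step (lampSub s) (lampSub s) := by
  rw [mem_doubleCoset]
  constructor
  · rintro (rfl | rfl)
    · refine ⟨1, one_mem _, lamp (s - 1), lamp_mem_lampSub ?_, ?_⟩
      · rw [val_natCast_half_sub_one]
        have := NeZero.pos s
        omega
      · rw [one_mul, lamp_zero_mul_step_mul_lamp_mul_lamp_neg_one]
    · exact ⟨lamp 0, lamp_mem_lampSub (by simp; exact NeZero.pos s), 1, one_mem _, (mul_one _).symm⟩
  · rintro ⟨κ₁, hκ₁, κ₂, hκ₂, rfl⟩
    exact eq_of_mem_centralizer_of_mem_doubleCoset (cayleySub_le_centralizer hr)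
      (mem_doubleCoset.2 ⟨κ₁, lampSub_le_lampsBelow hκ₁, κ₂, lampSub_le_lampsBelow hκ₂, rfl⟩)

end Complement

section Action

variable {m : ℕ}

instance : SMul (Lamplighter m) (ZMod m × ZMod 2) :=
  ⟨fun x p => (p.1 + x.pos, p.2 + x.lamps (p.1 + x.pos))⟩

lemma smul_def (x : Lamplighter m) (p : ZMod m × ZMod 2) :
    x • p = (p.1 + x.pos, p.2 + x.lamps (p.1 + x.pos)) := rfl

instance : MulAction (Lamplighter m) (ZMod m × ZMod 2) where
  one_smul p := by simp [smul_def]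
  mul_smul x y p := by
    have e : p.1 + (x.pos + y.pos) = p.1 + y.pos + x.pos := by ring
    simp only [smul_def, mul_pos, mul_lamps, Pi.add_apply, shift_apply, e, add_sub_cancel_right]
    ext <;> simp only [add_comm, add_left_comm]

instance : FaithfulSMul (Lamplighter m) (ZMod m × ZMod 2) where
  eq_of_smul_eq_smul {x y} h := by
    have hpos : x.pos = y.pos := by simpa [smul_def] using congrArg Prod.fst (h (0, 0))
    ext i
    · simpa [smul_def, hpos] using congrArg Prod.snd (h (i - y.pos, 0))
    · exact hpos

variable (s : ℕ) [NeZero s]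

def pointEquiv : Fin (4 * s) ≃ ZMod (2 * s) × ZMod 2 where
  toFun q := (((q : ℕ) / 2 : ℕ), ((q : ℕ) : ZMod 2))
  invFun p := ⟨2 * p.1.val + p.2.val, by have := ZMod.val_lt p.1; have := ZMod.val_lt p.2; omega⟩
  left_inv q := by
    have := q.isLt
    ext
    simp only [ZMod.val_natCast]
    rw [Nat.mod_eq_of_lt (by omega)]
    omega
  right_inv p := by
    have := ZMod.val_lt p.2
    ext
    · simp [show (2 * p.1.val + p.2.val) / 2 = p.1.val by omega]
    · simp [show (2 : ZMod 2) = 0 from rfl]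

def toPerm : Lamplighter (2 * s) →* Equiv.Perm (Fin (4 * s)) :=
  (pointEquiv s).symm.permCongrHom.toMonoidHom.comp (MulAction.toPermHom _ _)

variable {s}

lemma toPerm_injective : Function.Injective (toPerm s) :=
  (pointEquiv s).symm.permCongrHom.injective.comp MulAction.toPerm_injective

lemma toPerm_apply_val (x : Lamplighter (2 * s)) (q : Fin (4 * s)) :
    (toPerm s x q : ℕ) = 2 * ((((q : ℕ) / 2 : ℕ) : ZMod (2 * s)) + x.pos).val +
      (((q : ℕ) : ZMod 2) + x.lamps ((((q : ℕ) / 2 : ℕ) : ZMod (2 * s)) + x.pos)).val :=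
  rfl

lemma toPerm_step (g : Equiv.Perm (Fin (4 * s)))
    (hg : ∀ i : Fin (4 * s), (g i : ℕ) =
      if (i : ℕ) % 2 = 0 then (if (i : ℕ) = 4 * s - 2 then 0 else (i : ℕ) + 2)
      else (if (i : ℕ) = 4 * s - 1 then 1 else (i : ℕ) + 2)) :
    toPerm s step = g := by
  ext q
  have hq := q.isLt
  rw [toPerm_apply_val, hg, step_pos, step_lamps, Pi.zero_apply, add_zero, ZMod.val_natCast,
    ← Nat.cast_one, ← Nat.cast_add, ZMod.val_natCast]
  rcases Nat.lt_or_ge ((q : ℕ) / 2 + 1) (2 * s) with h | h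
  · rw [Nat.mod_eq_of_lt h]
    split_ifs <;> omega
  · rw [show (q : ℕ) / 2 + 1 = 2 * s by omega, Nat.mod_self]
    split_ifs <;> omega

lemma toPerm_lamp (j : ZMod (2 * s)) :
    toPerm s (lamp j) = Equiv.swap ⟨2 * j.val, by have := ZMod.val_lt j; omega⟩
      ⟨2 * j.val + 1, by have := ZMod.val_lt j; omega⟩ := by
  ext q
  have hq := q.isLt
  have hj := ZMod.val_lt j
  rw [toPerm_apply_val, lamp_pos, add_zero, lamp_lamps, Pi.single_apply,
    ZMod.val_cast_of_lt (by omega : (q : ℕ) / 2 < 2 * s)]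
  have hcast : (((q : ℕ) / 2 : ℕ) : ZMod (2 * s)) = j ↔ (q : ℕ) / 2 = j.val := by
    rw [← ZMod.natCast_zmod_val j, ZMod.natCast_eq_natCast_iff', Nat.mod_eq_of_lt (by omega),
      Nat.mod_eq_of_lt hj, ZMod.natCast_zmod_val]
  rw [Equiv.swap_apply_def]
  by_cases h : (q : ℕ) / 2 = j.val
  · rw [if_pos (hcast.2 h), ← Nat.cast_one, ← Nat.cast_add, ZMod.val_natCast]
    split_ifs with h₁ h₂ <;> simp only [Fin.ext_iff] at * <;> omega
  · rw [if_neg (mt hcast.1 h), add_zero, ZMod.val_natCast]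
    split_ifs with h₁ h₂ <;> simp only [Fin.ext_iff] at * <;> omega

lemma toPerm_lamp_zero :
    toPerm s (lamp 0) = Equiv.swap ⟨0, by have := NeZero.pos s; omega⟩
      ⟨1, by have := NeZero.pos s; omega⟩ := by
  rw [toPerm_lamp]
  congr 1 <;> ext <;> simp

lemma toPerm_lamp_mul_lamp :
    toPerm s (lamp ((s : ZMod (2 * s)) - 1) * lamp (-1)) =
      Equiv.swap ⟨2 * s - 2, by have := NeZero.pos s; omega⟩
        ⟨2 * s - 1, by have := NeZero.pos s; omega⟩ *
        Equiv.swap ⟨4 * s - 2, by have := NeZero.pos s; omega⟩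
          ⟨4 * s - 1, by have := NeZero.pos s; omega⟩ := by
  have := NeZero.pos s
  rw [map_mul, toPerm_lamp, toPerm_lamp]
  congr 2 <;> ext <;> simp only [val_natCast_half_sub_one, val_neg_one_half] <;> omega

end Action

end Lamplighter

open Lamplighter Subgroup

/-- `Sym(4s)` is `Equiv.Perm (Fin (4s))`, with the points `0, …, 4s−1` standing for `1, …, 4s`.
The paper composes permutations left to right and Mathlib right to left, so products are
reversed: the paper's `h^{g^i} = g^{-i} h g^i` is `g^i * h * (g^i)⁻¹` here, `b = gh` is `h * g`,
the paper's right cosets `Hx` are Mathlib's left cosets (`↥G ⧸ H`), arcs `y x⁻¹ ∈ HgH` become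
`x⁻¹ y ∈ HgH`, and arcs `y x⁻¹ ∈ {ab, b}` become `x⁻¹ y ∈ {ba, b}`. -/
theorem stmt10 (s : ℕ) (hs : 2 ≤ s)
    (h g a : Equiv.Perm (Fin (4 * s)))
    (hh : h = Equiv.swap ⟨0, by omega⟩ ⟨1, by omega⟩)
    (hg : ∀ i : Fin (4 * s), (g i : ℕ) =
      if (i : ℕ) % 2 = 0 then (if (i : ℕ) = 4 * s - 2 then 0 else (i : ℕ) + 2)
      else (if (i : ℕ) = 4 * s - 1 then 1 else (i : ℕ) + 2))
    (ha : a = Equiv.swap ⟨2 * s - 2, by omega⟩ ⟨2 * s - 1, by omega⟩ *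
      Equiv.swap ⟨4 * s - 2, by omega⟩ ⟨4 * s - 1, by omega⟩)
    (G : Subgroup (Equiv.Perm (Fin (4 * s)))) (hG : G = Subgroup.closure {h, g})
    (H : Subgroup ↥G)
    (hH : H = (Subgroup.closure {x : Equiv.Perm (Fin (4 * s)) |
      ∃ i : Fin s, x = g ^ (i : ℕ) * h * (g ^ (i : ℕ))⁻¹}).subgroupOf G)
    (R : Subgroup (Equiv.Perm (Fin (4 * s)))) (hR : R = Subgroup.closure {a, h * g})
    (g' : ↥G) (hg' : (g' : Equiv.Perm (Fin (4 * s))) = g) :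
    ∃ ψ : ↥R ≃ (↥G ⧸ H),
      ∀ r₁ r₂ : ↥R,
        ((r₁ : Equiv.Perm (Fin (4 * s)))⁻¹ * (r₂ : Equiv.Perm (Fin (4 * s))) =
            (h * g) * a ∨
         (r₁ : Equiv.Perm (Fin (4 * s)))⁻¹ * (r₂ : Equiv.Perm (Fin (4 * s))) = h * g) ↔
        ∃ x y : ↥G,
          QuotientGroup.mk x = ψ r₁ ∧ QuotientGroup.mk y = ψ r₂ ∧
          ∃ h₁ ∈ H, ∃ h₂ ∈ H, x⁻¹ * y = h₁ * g' * h₂ := by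
  have : NeZero s := ⟨by omega⟩
  have hΦh : toPerm s (lamp 0) = h := by rw [hh, toPerm_lamp_zero]
  have hΦg : toPerm s step = g := toPerm_step g hg
  have hΦa : toPerm s (lamp ((s : ZMod (2 * s)) - 1) * lamp (-1)) = a := by
    rw [ha, toPerm_lamp_mul_lamp]
  have hG' : closure {h, g} = (genSub s).map (toPerm s) := by
    rw [genSub, MonoidHom.map_closure, Set.image_pair, hΦh, hΦg]
  have hR' : closure {a, h * g} = (cayleySub s).map (toPerm s) := by
    rw [cayleySub, MonoidHom.map_closure, Set.image_pair, hΦa, map_mul, hΦh, hΦg]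
  have hK' := map_lampSub (toPerm s)
  rw [hΦh, hΦg] at hK'
  subst hG hR hH
  refine IsComplementIn.exists_equiv_quotient ?_ g' {h * g * a, h * g} ?_
  · rw [hG', hR', ← hK']
    exact isComplementIn_cayleySub_lampSub.map toPerm_injective
  · rw [hR', ← hK', hg', ← hΦg, ← hΦh, ← hΦa, ← map_mul, ← map_mul, ← Set.image_pair]
    exact mem_image_iff_mem_doubleCoset_map toPerm_injective fun r hr =>
      mem_pair_iff_mem_doubleCoset hr
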